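/- arXiv:2303.01015 — 6 statements merged into one kernel-verified Lean document; each statement's English description precedes it below -/
import Mathlib

section
/- Let $E,A\in\mathbb{C}^{n\times n}$, $B\in\mathbb{C}^{n\times m}$, let $z_1,\dots,z_S\in\mathbb{C}$ be distinct points such that $z_jE-A$ is invertible, and set $G(z_j)=(z_jE-A)^{-1}B$. Let $q_1,\dots,q_S\in\mathbb{C}$, define $Q(z)=\sum_{j=1}^S q_j/(z-z_j)$ and the barycentric surrogate $\widetilde{G}(z)=\big(\sum_{j=1}^S q_j G(z_j)/(z-z_j)\big)/Q(z)$. Then for every $z\notin\{z_1,\dots,z_S\}$ with $Q(z)\neq 0$, the residual satisfies $Q(z)\big((zE-A)\widetilde{G}(z)-B\big)=\sum_{j=1}^S q_j E\,G(z_j)$, a matrix independent of $z$. -/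
/-!
Since `(z_j E - A) G_j = B`, the pencil identity `w E - A = (w - z_j) E + (z_j E - A)` gives
`(w E - A) G_j = (w - z_j) E G_j + B`. Weighting by `q_j / (w - z_j)` and summing, the factors
`w - z_j` cancel in the first term and the `B` terms add up to `Q(w) B`.
-/

open Matrix

variable {k l ι : Type*} [Fintype k] [Fintype ι]

theorem Matrix.shift_mul_eq_of_mul_eq {R : Type*} [CommRing R] {E A : Matrix k k R}
    {X B : Matrix k l R} {z : R} (h : (z • E - A) * X = B) (w : R) :
    (w • E - A) * X = (w - z) • (E * X) + B := by
  rw [show w • E - A = (w - z) • E + (z • E - A) by module, Matrix.add_mul, h, Matrix.smul_mul]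

theorem Matrix.shift_mul_barycentric_sum_sub {K : Type*} [Field K] {E A : Matrix k k K}
    {B : Matrix k l K} {X : ι → Matrix k l K} {z : ι → K} (hX : ∀ j, (z j • E - A) * X j = B)
    (q : ι → K) {w : K} (hw : ∀ j, w ≠ z j) :
    (w • E - A) * ∑ j, (q j / (w - z j)) • X j - (∑ j, q j / (w - z j)) • B =
      ∑ j, q j • (E * X j) := by
  rw [Matrix.mul_sum, Finset.sum_smul, ← Finset.sum_sub_distrib]
  refine Finset.sum_congr rfl fun j _ => ?_
  rw [Matrix.mul_smul, shift_mul_eq_of_mul_eq (hX j), smul_add, smul_smul,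
    div_mul_cancel₀ _ (sub_ne_zero.mpr (hw j)), add_sub_cancel_right]

theorem loewner_residual_identity_general
    {n m S : ℕ}
    (E A : Matrix (Fin n) (Fin n) ℂ) (B : Matrix (Fin n) (Fin m) ℂ)
    (z : Fin S → ℂ)
    (hinv : ∀ j, IsUnit (z j • E - A))
    (q : Fin S → ℂ)
    (G : Fin S → Matrix (Fin n) (Fin m) ℂ)
    (hG : ∀ j, G j = (z j • E - A)⁻¹ * B)
    (Q : ℂ → ℂ) (hQ : ∀ w, Q w = ∑ j, q j / (w - z j))
    (Gt : ℂ → Matrix (Fin n) (Fin m) ℂ)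
    (hGt : ∀ w, Gt w = (Q w)⁻¹ • ∑ j, (q j / (w - z j)) • G j) :
    ∀ w : ℂ, w ∉ Set.range z → Q w ≠ 0 →
      Q w • ((w • E - A) * Gt w - B) = ∑ j, q j • (E * G j) := by
  intro w hw hQw
  have hGsolves : ∀ j, (z j • E - A) * G j = B := fun j => by
    rw [hG j]
    exact mul_nonsing_inv_cancel_left _ _ ((isUnit_iff_isUnit_det _).mp (hinv j))
  calc Q w • ((w • E - A) * Gt w - B)
      = (w • E - A) * ∑ j, (q j / (w - z j)) • G j - Q w • B := by
        rw [hGt, Matrix.mul_smul, smul_sub, smul_smul, mul_inv_cancel₀ hQw, one_smul]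
    _ = ∑ j, q j • (E * G j) := by
        rw [hQ]
        exact shift_mul_barycentric_sum_sub hGsolves q fun j h => hw ⟨j, h.symm⟩

/-- The barycentric state surrogate's residual, multiplied by the
barycentric denominator `Q`, equals the `z`-independent matrix `∑ j, q j • (E * G j)`. -/
theorem loewner_residual_identity
    {n m S : ℕ}
    (E A : Matrix (Fin n) (Fin n) ℂ) (B : Matrix (Fin n) (Fin m) ℂ)
    (z : Fin S → ℂ) (hz : Function.Injective z)
    (hinv : ∀ j, IsUnit (z j • E - A))
    (q : Fin S → ℂ)
    (G : Fin S → Matrix (Fin n) (Fin m) ℂ)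
    (hG : ∀ j, G j = (z j • E - A)⁻¹ * B)
    (Q : ℂ → ℂ) (hQ : ∀ w, Q w = ∑ j, q j / (w - z j))
    (Gt : ℂ → Matrix (Fin n) (Fin m) ℂ)
    (hGt : ∀ w, Gt w = (Q w)⁻¹ • ∑ j, (q j / (w - z j)) • G j) :
    ∀ w : ℂ, w ∉ Set.range z → Q w ≠ 0 →
      Q w • ((w • E - A) * Gt w - B) = ∑ j, q j • (E * G j) :=
  loewner_residual_identity_general E A B z hinv q G hG Q hQ Gt hGt
end

section
/- With the notation of the previous setting (distinct $z_1,\dots,z_S$, weights $q_j$, $G(z_j)=(z_jE-A)^{-1}B$, $Q(z)=\sum_j q_j/(z-z_j)$, barycentric surrogate $\widetilde{G}$), define the relative residual norm $\rho(\widetilde{G},z)=\|(zE-A)\widetilde{G}(z)-B\|_F/\|B\|_F$ where $B\neq 0$. Then there exists a constant $\gamma\ge 0$, independent of $z$, namely $\gamma=\|\sum_{j=1}^S q_jEG(z_j)\|_F/\|B\|_F$, such that $\rho(\widetilde{G},z)=\gamma\,|Q(z)|^{-1}$ for all $z\notin\{z_1,\dots,z_S\}$ with $Q(z)\neq 0$.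 -/
/-!
Since `(z_j E - A) G(z_j) = B`, shifting the point gives
`(w E - A) G(z_j) = B + (w - z_j) E G(z_j)`. Weighting by `q_j / (w - z_j)` and summing, the
`B`-terms add up to `Q(w) B`, so the residual of the surrogate is exactly
`Q(w)⁻¹ ∑ q_j E G(z_j)`: a fixed matrix scaled by `Q(w)⁻¹`. The Frobenius norm is absolutely
homogeneous, which gives the claim.
-/

/-- The Frobenius norm of a complex matrix. -/
noncomputable def frob {a b : ℕ} (M : Matrix (Fin a) (Fin b) ℂ) : ℝ :=
  Real.sqrt (∑ i, ∑ j, ‖M i j‖ ^ 2)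

lemma frob_smul {a b : ℕ} (c : ℂ) (M : Matrix (Fin a) (Fin b) ℂ) :
    frob (c • M) = ‖c‖ * frob M := by
  unfold frob
  rw [← Real.sqrt_sq (norm_nonneg c), ← Real.sqrt_mul (sq_nonneg _)]
  congr 1
  simp only [Matrix.smul_apply, smul_eq_mul, norm_mul, mul_pow, Finset.mul_sum]

lemma frob_nonneg {a b : ℕ} (M : Matrix (Fin a) (Fin b) ℂ) : 0 ≤ frob M :=
  Real.sqrt_nonneg _

section Barycentric

variable {ι n m : Type*} [Fintype n]

lemma smul_sub_mul_eq_add_smul_mul {R : Type*} [CommRing R] {E A : Matrix n n R}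
    {B G : Matrix n m R} {z : R} (h : (z • E - A) * G = B) (w : R) :
    (w • E - A) * G = B + (w - z) • (E * G) := by
  rw [show w • E - A = (z • E - A) + (w - z) • E by module, Matrix.add_mul, h,
    Matrix.smul_mul]

lemma barycentric_residual_eq {𝕜 : Type*} [Field 𝕜] [Fintype ι] {E A : Matrix n n 𝕜}
    {B : Matrix n m 𝕜} {z q : ι → 𝕜} {G : ι → Matrix n m 𝕜}
    (hG : ∀ j, (z j • E - A) * G j = B) {w : 𝕜} (hw : ∀ j, w ≠ z j)
    (hQ : ∑ j, q j / (w - z j) ≠ 0) :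
    (w • E - A) * ((∑ j, q j / (w - z j))⁻¹ • ∑ j, (q j / (w - z j)) • G j) - B =
      (∑ j, q j / (w - z j))⁻¹ • ∑ j, q j • (E * G j) := by
  have hterm : ∀ j, (w • E - A) * ((q j / (w - z j)) • G j) =
      (q j / (w - z j)) • B + q j • (E * G j) := fun j => by
    rw [Matrix.mul_smul, smul_sub_mul_eq_add_smul_mul (hG j) w, smul_add, smul_smul,
      div_mul_cancel₀ _ (sub_ne_zero.mpr (hw j))]
  rw [Matrix.mul_smul, Matrix.mul_sum, Finset.sum_congr rfl fun j _ => hterm j,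
    Finset.sum_add_distrib, ← Finset.sum_smul, smul_add, inv_smul_smul₀ hQ, add_sub_cancel_left]

end Barycentric

theorem relative_residual_eq_gamma_mul_inv_absQ_general
    {n m S : ℕ}
    (E A : Matrix (Fin n) (Fin n) ℂ) (B : Matrix (Fin n) (Fin m) ℂ)
    (z : Fin S → ℂ)
    (hinv : ∀ j, IsUnit (z j • E - A))
    (q : Fin S → ℂ)
    (G : Fin S → Matrix (Fin n) (Fin m) ℂ)
    (hG : ∀ j, G j = (z j • E - A)⁻¹ * B)
    (Q : ℂ → ℂ) (hQ : ∀ w, Q w = ∑ j, q j / (w - z j))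
    (Gt : ℂ → Matrix (Fin n) (Fin m) ℂ)
    (hGt : ∀ w, Gt w = (Q w)⁻¹ • ∑ j, (q j / (w - z j)) • G j)
    (ρ : ℂ → ℝ) (hρ : ∀ w, ρ w = frob ((w • E - A) * Gt w - B) / frob B)
    (γ : ℝ) (hγ : γ = frob (∑ j, q j • (E * G j)) / frob B) :
    0 ≤ γ ∧ ∀ w : ℂ, w ∉ Set.range z → Q w ≠ 0 → ρ w = γ * ‖Q w‖⁻¹ := by
  refine ⟨hγ ▸ div_nonneg (frob_nonneg _) (frob_nonneg _), fun w hw hQw => ?_⟩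
  have hsolve : ∀ j, (z j • E - A) * G j = B := fun j => by
    rw [hG, Matrix.mul_nonsing_inv_cancel_left _ _ ((Matrix.isUnit_iff_isUnit_det _).mp (hinv j))]
  have hwz : ∀ j, w ≠ z j := fun j h => hw ⟨j, h.symm⟩
  rw [hQ] at hQw
  rw [hρ, hGt, hQ, barycentric_residual_eq hsolve hwz hQw, frob_smul, norm_inv, hγ]
  ring

/-- The relative residual norm of the barycentric state surrogate equals
a `z`-independent constant `γ` times `|Q(z)|⁻¹`. -/
theorem relative_residual_eq_gamma_mul_inv_absQ
    {n m S : ℕ}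
    (E A : Matrix (Fin n) (Fin n) ℂ) (B : Matrix (Fin n) (Fin m) ℂ)
    (hB : B ≠ 0)
    (z : Fin S → ℂ) (hz : Function.Injective z)
    (hinv : ∀ j, IsUnit (z j • E - A))
    (q : Fin S → ℂ)
    (G : Fin S → Matrix (Fin n) (Fin m) ℂ)
    (hG : ∀ j, G j = (z j • E - A)⁻¹ * B)
    (Q : ℂ → ℂ) (hQ : ∀ w, Q w = ∑ j, q j / (w - z j))
    (Gt : ℂ → Matrix (Fin n) (Fin m) ℂ)
    (hGt : ∀ w, Gt w = (Q w)⁻¹ • ∑ j, (q j / (w - z j)) • G j)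
    (ρ : ℂ → ℝ) (hρ : ∀ w, ρ w = frob ((w • E - A) * Gt w - B) / frob B)
    (γ : ℝ) (hγ : γ = frob (∑ j, q j • (E * G j)) / frob B) :
    0 ≤ γ ∧ ∀ w : ℂ, w ∉ Set.range z → Q w ≠ 0 → ρ w = γ * ‖Q w‖⁻¹ :=
  relative_residual_eq_gamma_mul_inv_absQ_general E A B z hinv q G hG Q hQ Gt hGt ρ hρ γ hγ
end

section
/- Let $C\in\mathbb{C}^{p\times n}$, $E,A\in\mathbb{C}^{n\times n}$, $B\in\mathbb{C}^{n\times m}$, distinct points $z_1,\dots,z_S$ with $z_jE-A$ invertible, $H(z)=C(zE-A)^{-1}B$, weights $q_j$, $Q(z)=\sum_j q_j/(z-z_j)$, and the interpolatory barycentric surrogate $\widetilde{H}(z)=\sum_j\frac{q_jH(z_j)}{z-z_j}/Q(z)$. Set $\widetilde{B}=E\sum_{j=1}^S q_j(z_jE-A)^{-1}B$. Then for every $z$ with $zE-A$ invertible, $z\notin\{z_1,\dots,z_S\}$, and $Q(z)\neq 0$, one has $\widetilde{H}(z)-H(z)=Q(z)^{-1}\,C(zE-A)^{-1}\widetilde{B}$.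 -/
/-!
The resolvent identity for the pencil, `(zE - A)⁻¹ - (wE - A)⁻¹ = (w - z) (wE - A)⁻¹ E (zE - A)⁻¹`,
gives `H(z_j) - H(w) = (w - z_j) C (wE - A)⁻¹ E (z_jE - A)⁻¹ B`. Since the surrogate is a weighted
mean of the samples with weights `q_j / (w - z_j)` summing to `Q(w)`, its error is the same weighted
mean of these differences, in which the factors `w - z_j` cancel and leave `C (wE - A)⁻¹ B̃`.
-/

open Finset

section Barycentric

variable {K M ι : Type*} [Field K] [AddCommGroup M] [Module K M]

theorem inv_sum_smul_sum_sub (s : Finset ι) (c : ι → K) (f : ι → M) (g : M)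
    (hc : ∑ i ∈ s, c i ≠ 0) :
    (∑ i ∈ s, c i)⁻¹ • ∑ i ∈ s, c i • f i - g = (∑ i ∈ s, c i)⁻¹ • ∑ i ∈ s, c i • (f i - g) := by
  simp only [smul_sub, sum_sub_distrib, ← sum_smul, inv_smul_smul₀ hc]

end Barycentric

namespace Matrix

variable {n R : Type*} [Fintype n] [DecidableEq n] [CommRing R]

theorem pencil_inv_sub_inv {E A : Matrix n n R} {z w : R}
    (h : IsUnit (z • E - A) ↔ IsUnit (w • E - A)) :
    (z • E - A)⁻¹ - (w • E - A)⁻¹ = (w - z) • ((w • E - A)⁻¹ * E * (z • E - A)⁻¹) := by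
  have hdiff : z • E - A - (w • E - A) = -((w - z) • E) := by
    rw [sub_smul]; abel
  rw [← neg_sub, inv_sub_inv h.symm, hdiff, Matrix.mul_neg, Matrix.neg_mul, neg_neg,
    Matrix.mul_smul, Matrix.smul_mul]

end Matrix

section TransferFunction

variable {n m p R : Type*} [Fintype n] [DecidableEq n] [CommRing R]

noncomputable def transferFunction (C : Matrix p n R) (E A : Matrix n n R) (B : Matrix n m R) (w : R) :
    Matrix p m R :=
  C * ((w • E - A)⁻¹ * B)

theorem transferFunction_sub (C : Matrix p n R) {E A : Matrix n n R} (B : Matrix n m R) {z w : R}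
    (h : IsUnit (z • E - A) ↔ IsUnit (w • E - A)) :
    transferFunction C E A B z - transferFunction C E A B w
      = (w - z) • (C * ((w • E - A)⁻¹ * (E * ((z • E - A)⁻¹ * B)))) := by
  simp only [transferFunction, ← Matrix.mul_sub, ← Matrix.sub_mul, Matrix.pencil_inv_sub_inv h,
    Matrix.smul_mul, Matrix.mul_smul, Matrix.mul_assoc]

end TransferFunction

theorem surrogate_error_representation_general
    {n m p S : ℕ}
    (C : Matrix (Fin p) (Fin n) ℂ)
    (E A : Matrix (Fin n) (Fin n) ℂ) (B : Matrix (Fin n) (Fin m) ℂ)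
    (z : Fin S → ℂ)
    (hinv : ∀ j, IsUnit (z j • E - A))
    (q : Fin S → ℂ)
    (H : ℂ → Matrix (Fin p) (Fin m) ℂ)
    (hH : ∀ w, H w = C * ((w • E - A)⁻¹ * B))
    (Q : ℂ → ℂ) (hQ : ∀ w, Q w = ∑ j, q j / (w - z j))
    (Ht : ℂ → Matrix (Fin p) (Fin m) ℂ)
    (hHt : ∀ w, Ht w = (Q w)⁻¹ • ∑ j, (q j / (w - z j)) • H (z j))
    (Bt : Matrix (Fin n) (Fin m) ℂ)
    (hBt : Bt = E * ∑ j, q j • ((z j • E - A)⁻¹ * B)) :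
    ∀ w : ℂ, IsUnit (w • E - A) → w ∉ Set.range z → Q w ≠ 0 →
      Ht w - H w = (Q w)⁻¹ • (C * ((w • E - A)⁻¹ * Bt)) := by
  intro w hw hwz hQw
  obtain rfl : H = transferFunction C E A B := funext hH
  have hterm : ∀ j,
      (q j / (w - z j)) • (transferFunction C E A B (z j) - transferFunction C E A B w)
      = q j • (C * ((w • E - A)⁻¹ * (E * ((z j • E - A)⁻¹ * B)))) := fun j => by
    have hne : w - z j ≠ 0 := sub_ne_zero.mpr fun h => hwz ⟨j, h.symm⟩
    rw [transferFunction_sub C B (iff_of_true (hinv j) hw), smul_smul, div_mul_cancel₀ _ hne]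
  rw [hQ] at hQw
  rw [hHt, hQ, inv_sum_smul_sum_sub _ _ _ _ hQw, Finset.sum_congr rfl fun j _ => hterm j, hBt]
  simp only [Matrix.mul_sum, Matrix.mul_smul]

/-- Exact error representation for the barycentric surrogate of the
output transfer function: `H̃(z) - H(z) = Q(z)⁻¹ • C (zE - A)⁻¹ B̃`. -/
theorem surrogate_error_representation
    {n m p S : ℕ}
    (C : Matrix (Fin p) (Fin n) ℂ)
    (E A : Matrix (Fin n) (Fin n) ℂ) (B : Matrix (Fin n) (Fin m) ℂ)
    (z : Fin S → ℂ) (hz : Function.Injective z)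
    (hinv : ∀ j, IsUnit (z j • E - A))
    (q : Fin S → ℂ)
    (H : ℂ → Matrix (Fin p) (Fin m) ℂ)
    (hH : ∀ w, H w = C * ((w • E - A)⁻¹ * B))
    (Q : ℂ → ℂ) (hQ : ∀ w, Q w = ∑ j, q j / (w - z j))
    (Ht : ℂ → Matrix (Fin p) (Fin m) ℂ)
    (hHt : ∀ w, Ht w = (Q w)⁻¹ • ∑ j, (q j / (w - z j)) • H (z j))
    (Bt : Matrix (Fin n) (Fin m) ℂ)
    (hBt : Bt = E * ∑ j, q j • ((z j • E - A)⁻¹ * B)) :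
    ∀ w : ℂ, IsUnit (w • E - A) → w ∉ Set.range z → Q w ≠ 0 →
      Ht w - H w = (Q w)⁻¹ • (C * ((w • E - A)⁻¹ * Bt)) :=
  surrogate_error_representation_general C E A B z hinv q H hH Q hQ Ht hHt Bt hBt
end

section
/- Let $z_1,\dots,z_S\in\mathbb{C}$ be distinct and $q_1,\dots,q_S\in\mathbb{C}$. Let $\widetilde{\lambda}\in\mathbb{C}\setminus\{z_1,\dots,z_S\}$. Then $\sum_{j=1}^S q_j/(\widetilde{\lambda}-z_j)=0$ if and only if $\widetilde{\lambda}$ is a generalized eigenvalue of the arrow pencil $(M,N)$ of size $S+1$, where $M$ has first row $(0,q_1,\dots,q_S)$, first column $(0,1,\dots,1)^T$, diagonal entries $z_1,\dots,z_S$ in positions $2,\dots,S+1$, and zeros elsewhere, and $N=\mathrm{diag}(0,1,\dots,1)$; that is, there exists a nonzero vector $v\in\mathbb{C}^{S+1}$ with $Mv=\widetilde{\lambda}Nv$. -/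
/-- A point `λ` outside the support set is a root of the barycentric
denominator `∑ j, q j / (λ - z j)` iff it is a generalized eigenvalue of the arrow
pencil `(M, N)` of size `S + 1`, with `M` having first row `(0, q₁, …, q_S)`, first
column `(0, 1, …, 1)ᵀ`, the `z j` on the remaining diagonal, and zeros elsewhere, and
`N = diag(0, 1, …, 1)`. -/
theorem barycentric_roots_arrow_pencil
    {S : ℕ}
    (z : Fin S → ℂ) (hz : Function.Injective z)
    (q : Fin S → ℂ)
    (lam : ℂ) (hlam : lam ∉ Set.range z)
    (M N : Matrix (Fin (S + 1)) (Fin (S + 1)) ℂ)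
    (hM : M = Matrix.of fun i k =>
      if hi : i = 0 then (if hk : k = 0 then 0 else q (k.pred hk))
      else if hk : k = 0 then 1
      else if i = k then z (i.pred hi) else 0)
    (hN : N = Matrix.diagonal fun i => if i = 0 then 0 else 1) :
    (∑ j, q j / (lam - z j)) = 0 ↔
      ∃ v : Fin (S + 1) → ℂ, v ≠ 0 ∧ M.mulVec v = lam • N.mulVec v := by
  subst hM hN
  have hzi : ∀ i : Fin S, lam - z i ≠ 0 := by
    intro i
    refine sub_ne_zero.mpr fun h => hlam ⟨i, h.symm⟩
  have hrow0 : ∀ v : Fin (S + 1) → ℂ,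
      (Matrix.of fun i k =>
        if hi : i = 0 then (if hk : k = 0 then (0 : ℂ) else q (k.pred hk))
        else if hk : k = 0 then 1
        else if i = k then z (i.pred hi) else 0).mulVec v 0 = ∑ j : Fin S, q j * v j.succ := by
    intro v
    simp [Matrix.mulVec, dotProduct, Fin.sum_univ_succ, Fin.succ_ne_zero]
  have hrows : ∀ (v : Fin (S + 1) → ℂ) (i : Fin S),
      (Matrix.of fun i k =>
        if hi : i = 0 then (if hk : k = 0 then (0 : ℂ) else q (k.pred hk))
        else if hk : k = 0 then 1
        else if i = k then z (i.pred hi) else 0).mulVec v i.succ = v 0 + z i * v i.succ := by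
    intro v i
    simp only [Matrix.mulVec, dotProduct, Matrix.of_apply, Fin.sum_univ_succ,
      dif_neg (Fin.succ_ne_zero i), dif_pos rfl, Fin.pred_succ, one_mul]
    congr 1
    · simp
    · simp only [dif_neg (Fin.succ_ne_zero _), Fin.succ_inj, ite_mul, zero_mul]
      simp
  have hNrow0 : ∀ v : Fin (S + 1) → ℂ,
      (Matrix.diagonal fun i : Fin (S + 1) => if i = 0 then (0 : ℂ) else 1).mulVec v 0 = 0 := by
    intro v; simp [Matrix.mulVec_diagonal]
  have hNrows : ∀ (v : Fin (S + 1) → ℂ) (i : Fin S),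
      (Matrix.diagonal fun i : Fin (S + 1) => if i = 0 then (0 : ℂ) else 1).mulVec v i.succ
        = v i.succ := by
    intro v i; simp [Matrix.mulVec_diagonal, Fin.succ_ne_zero]
  constructor
  · intro hsum
    refine ⟨fun k => if h : k = 0 then 1 else 1 / (lam - z (k.pred h)), ?_, ?_⟩
    · intro h
      have := congrFun h 0
      simp at this
    · funext i
      induction i using Fin.cases with
      | zero =>
        rw [hrow0, Pi.smul_apply, hNrow0, smul_zero, ← hsum]
        refine Finset.sum_congr rfl fun j _ => ?_
        rw [dif_neg (Fin.succ_ne_zero j), Fin.pred_succ]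
        ring
      | succ i =>
        rw [hrows, Pi.smul_apply, hNrows, smul_eq_mul,
          dif_pos rfl, dif_neg (Fin.succ_ne_zero i), Fin.pred_succ]
        field_simp [hzi i]
        ring
  · rintro ⟨v, hv, heq⟩
    have key : ∀ i : Fin S, v i.succ = v 0 / (lam - z i) := by
      intro i
      have h := congrFun heq i.succ
      rw [hrows, Pi.smul_apply, hNrows, smul_eq_mul] at h
      rw [eq_div_iff (hzi i)]
      linear_combination -h
    have hv0 : v 0 ≠ 0 := by
      intro h0
      apply hv
      funext i
      induction i using Fin.cases with
      | zero => exact h0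
      | succ i => simp [key i, h0]
    have h0 := congrFun heq 0
    rw [hrow0, Pi.smul_apply, hNrow0, smul_zero] at h0
    have hmul : v 0 * ∑ j, q j / (lam - z j) = 0 := by
      rw [Finset.mul_sum, ← h0]
      refine Finset.sum_congr rfl fun j _ => ?_
      rw [key j]
      ring
    exact (mul_eq_zero.mp hmul).resolve_left hv0
end

section
/- Let $E,A\in\mathbb{C}^{n\times n}$, $B\in\mathbb{C}^{n\times m}$, $C\in\mathbb{C}^{p\times n}$, distinct support points $z_1,\dots,z_S$ with each $z_jE-A$ invertible, and weights $q_1,\dots,q_S$. Define $\widetilde{B}=E\sum_j q_j(z_jE-A)^{-1}B$ and suppose $C(zE-A)^{-1}\widetilde{B}=0$ for some $z$ with $zE-A$ invertible, $z\notin\{z_j\}$, and $Q(z)=\sum_j q_j/(z-z_j)\neq 0$. Then the barycentric surrogate $\widetilde{H}$ built from the samples $H(z_j)=C(z_jE-A)^{-1}B$ with weights $q_j$ satisfies $\widetilde{H}(z)=H(z)$ exactly at that frequency $z$. -/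
/-- If `C (zE - A)⁻¹ B̃ = 0` at some admissible frequency `z`, then the
barycentric surrogate is exact there: `H̃(z) = H(z)`. -/
theorem surrogate_exact_when_CresolventBt_vanishes
    {n m p S : ℕ}
    (C : Matrix (Fin p) (Fin n) ℂ)
    (E A : Matrix (Fin n) (Fin n) ℂ) (B : Matrix (Fin n) (Fin m) ℂ)
    (z : Fin S → ℂ) (hz : Function.Injective z)
    (hinv : ∀ j, IsUnit (z j • E - A))
    (q : Fin S → ℂ)
    (H : ℂ → Matrix (Fin p) (Fin m) ℂ)
    (hH : ∀ w, H w = C * ((w • E - A)⁻¹ * B))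
    (Q : ℂ → ℂ) (hQ : ∀ w, Q w = ∑ j, q j / (w - z j))
    (Ht : ℂ → Matrix (Fin p) (Fin m) ℂ)
    (hHt : ∀ w, Ht w = (Q w)⁻¹ • ∑ j, (q j / (w - z j)) • H (z j))
    (Bt : Matrix (Fin n) (Fin m) ℂ)
    (hBt : Bt = E * ∑ j, q j • ((z j • E - A)⁻¹ * B)) :
    ∀ w : ℂ, IsUnit (w • E - A) → w ∉ Set.range z → Q w ≠ 0 →
      C * ((w • E - A)⁻¹ * Bt) = 0 → Ht w = H w := by
  intro w hw hwz hQw hC0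
  have hP : ∀ j, w ≠ z j := fun j h => hwz ⟨j, h.symm⟩
  set Rw := (w • E - A)⁻¹ with hRw
  have hwu : IsUnit (w • E - A).det := (Matrix.isUnit_iff_isUnit_det _).mp hw
  have key : ∀ j : Fin S,
      C * (Rw * (E * ((z j • E - A)⁻¹ * B))) = (w - z j)⁻¹ • (H (z j) - H w) := by
    intro j
    have hju : IsUnit (z j • E - A).det := (Matrix.isUnit_iff_isUnit_det _).mp (hinv j)
    have h1 : Rw * (w • E - A) = 1 := Matrix.nonsing_inv_mul _ hwu
    have h2 : (z j • E - A) * (z j • E - A)⁻¹ = 1 := Matrix.mul_nonsing_inv _ hju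
    have hdiff : (w - z j) • E = (w • E - A) - (z j • E - A) := by
      rw [sub_smul]; abel
    have hne : w - z j ≠ 0 := sub_ne_zero.mpr (hP j)
    have h3 : (w - z j) • (Rw * E * (z j • E - A)⁻¹)
        = (z j • E - A)⁻¹ - Rw := by
      calc (w - z j) • (Rw * E * (z j • E - A)⁻¹)
          = Rw * ((w - z j) • E) * (z j • E - A)⁻¹ := by
            simp [Matrix.smul_mul, Matrix.mul_smul]
        _ = Rw * ((w • E - A) - (z j • E - A)) * (z j • E - A)⁻¹ := by rw [hdiff]
        _ = (z j • E - A)⁻¹ - Rw := by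
            rw [Matrix.mul_sub, Matrix.sub_mul, h1, Matrix.one_mul, Matrix.mul_assoc,
              h2, Matrix.mul_one]
    have h4 : Rw * E * (z j • E - A)⁻¹ = (w - z j)⁻¹ • ((z j • E - A)⁻¹ - Rw) := by
      rw [← h3, smul_smul, inv_mul_cancel₀ hne, one_smul]
    calc C * (Rw * (E * ((z j • E - A)⁻¹ * B)))
        = C * (Rw * E * (z j • E - A)⁻¹) * B := by
          simp only [Matrix.mul_assoc]
      _ = (w - z j)⁻¹ • (C * ((z j • E - A)⁻¹ - Rw) * B) := by
          rw [h4, Matrix.mul_smul, Matrix.smul_mul]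
      _ = (w - z j)⁻¹ • (H (z j) - H w) := by
          simp [hH, hRw, Matrix.mul_sub, Matrix.sub_mul, Matrix.mul_assoc]
  have expand : C * (Rw * Bt)
      = (∑ j, (q j / (w - z j)) • H (z j)) - Q w • H w := by
    rw [hBt, hQ]
    have : C * (Rw * (E * ∑ j, q j • ((z j • E - A)⁻¹ * B)))
        = ∑ j, q j • (C * (Rw * (E * ((z j • E - A)⁻¹ * B)))) := by
      rw [Matrix.mul_sum, Matrix.mul_sum, Matrix.mul_sum]
      simp [Matrix.mul_smul]
    rw [this]
    rw [Finset.sum_smul, ← Finset.sum_sub_distrib]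
    refine Finset.sum_congr rfl fun j _ => ?_
    simp [key j, smul_smul, smul_sub, div_eq_mul_inv]
  have hsum : (∑ j, (q j / (w - z j)) • H (z j)) = Q w • H w := by
    have h := hC0
    rw [expand, sub_eq_zero] at h
    exact h
  rw [hHt, hsum, smul_smul, inv_mul_cancel₀ hQw, one_smul, hH]
end

section
/- Let $E,A\in\mathbb{C}^{n\times n}$, $B\in\mathbb{C}^{n\times m}$, distinct $z_1,\dots,z_S$ with each $z_jE-A$ invertible, weights $q_j$, $G(z_j)=(z_jE-A)^{-1}B$, and $Q(z)=\sum_j q_j/(z-z_j)$. If $\sum_{j=1}^S q_jE\,G(z_j)=0$, then the barycentric surrogate $\widetilde{G}(z)=\sum_j\frac{q_jG(z_j)}{z-z_j}/Q(z)$ reproduces $G$ exactly: $\widetilde{G}(z)=(zE-A)^{-1}B$ for every $z$ with $zE-A$ invertible, $z\notin\{z_j\}$, and $Q(z)\neq 0$. -/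
/-!
Each sample satisfies `(z_j E - A) G(z_j) = B`, so writing `w E - A = (z_j E - A) + (w - z_j) E`
gives `(w E - A) · (q_j / (w - z_j)) G(z_j) = (q_j / (w - z_j)) B + q_j E G(z_j)`. Summing over `j`,
`(w E - A) · ∑_j (q_j / (w - z_j)) G(z_j) = Q(w) B + ∑_j q_j E G(z_j)`. When the residual sum
vanishes and `Q(w) ≠ 0`, this says `(w E - A) G̃(w) = B`, and `w E - A` is invertible.
-/

namespace Matrix

variable {𝕜 ι : Type*} {n m : Type*} [Fintype n]

theorem smul_sub_mul_eq_add_of_smul_sub_mul_eq [CommRing 𝕜] {E A : Matrix n n 𝕜}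
    {B : Matrix n m 𝕜} {z : 𝕜} {G : Matrix n m 𝕜}
    (hG : (z • E - A) * G = B) (w : 𝕜) :
    (w • E - A) * G = B + (w - z) • (E * G) := by
  rw [← hG, ← Matrix.smul_mul, ← Matrix.add_mul, sub_smul]
  congr 1
  abel

theorem smul_sub_mul_barycentric_sum [Field 𝕜] [Fintype ι] {E A : Matrix n n 𝕜}
    {B : Matrix n m 𝕜} {z q : ι → 𝕜} {G : ι → Matrix n m 𝕜}
    (hG : ∀ j, (z j • E - A) * G j = B) {w : 𝕜} (hw : ∀ j, w ≠ z j) :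
    (w • E - A) * ∑ j, (q j / (w - z j)) • G j =
      (∑ j, q j / (w - z j)) • B + ∑ j, q j • (E * G j) := by
  have hterm : ∀ j, (w • E - A) * ((q j / (w - z j)) • G j) =
      (q j / (w - z j)) • B + q j • (E * G j) := fun j => by
    rw [Matrix.mul_smul, smul_sub_mul_eq_add_of_smul_sub_mul_eq (hG j) w, smul_add, smul_smul,
      div_mul_cancel₀ _ (sub_ne_zero.mpr (hw j))]
  simp only [Matrix.mul_sum, hterm, Finset.sum_add_distrib, Finset.sum_smul]

end Matrix

theorem surrogate_exact_when_residual_vector_vanishes_general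
    {n m S : ℕ}
    (E A : Matrix (Fin n) (Fin n) ℂ) (B : Matrix (Fin n) (Fin m) ℂ)
    (z : Fin S → ℂ)
    (hinv : ∀ j, IsUnit (z j • E - A))
    (q : Fin S → ℂ)
    (G : Fin S → Matrix (Fin n) (Fin m) ℂ)
    (hG : ∀ j, G j = (z j • E - A)⁻¹ * B)
    (Q : ℂ → ℂ) (hQ : ∀ w, Q w = ∑ j, q j / (w - z j))
    (Gt : ℂ → Matrix (Fin n) (Fin m) ℂ)
    (hGt : ∀ w, Gt w = (Q w)⁻¹ • ∑ j, (q j / (w - z j)) • G j)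
    (hres : (∑ j, q j • (E * G j)) = 0) :
    ∀ w : ℂ, IsUnit (w • E - A) → w ∉ Set.range z → Q w ≠ 0 →
      Gt w = (w • E - A)⁻¹ * B := by
  intro w hw hwz hQw
  have hsample : ∀ j, (z j • E - A) * G j = B := fun j => by
    rw [hG j, Matrix.mul_nonsing_inv_cancel_left _ _ ((Matrix.isUnit_iff_isUnit_det _).mp (hinv j))]
  have hsum := Matrix.smul_sub_mul_barycentric_sum (q := q) hsample
    (w := w) fun j hj => hwz ⟨j, hj.symm⟩
  rw [hres, add_zero, ← hQ] at hsum
  have hsolves : (w • E - A) * Gt w = B := by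
    rw [hGt, Matrix.mul_smul, hsum, smul_smul, inv_mul_cancel₀ hQw, one_smul]
  rw [← hsolves,
    Matrix.nonsing_inv_mul_cancel_left _ _ ((Matrix.isUnit_iff_isUnit_det _).mp hw)]

/-- If the residual vector `∑ j, q j • (E * G(z j))` vanishes, the
barycentric state surrogate reproduces `G` exactly wherever both are defined. -/
theorem surrogate_exact_when_residual_vector_vanishes
    {n m S : ℕ}
    (E A : Matrix (Fin n) (Fin n) ℂ) (B : Matrix (Fin n) (Fin m) ℂ)
    (z : Fin S → ℂ) (hz : Function.Injective z)
    (hinv : ∀ j, IsUnit (z j • E - A))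
    (q : Fin S → ℂ)
    (G : Fin S → Matrix (Fin n) (Fin m) ℂ)
    (hG : ∀ j, G j = (z j • E - A)⁻¹ * B)
    (Q : ℂ → ℂ) (hQ : ∀ w, Q w = ∑ j, q j / (w - z j))
    (Gt : ℂ → Matrix (Fin n) (Fin m) ℂ)
    (hGt : ∀ w, Gt w = (Q w)⁻¹ • ∑ j, (q j / (w - z j)) • G j)
    (hres : (∑ j, q j • (E * G j)) = 0) :
    ∀ w : ℂ, IsUnit (w • E - A) → w ∉ Set.range z → Q w ≠ 0 →
      Gt w = (w • E - A)⁻¹ * B :=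
  surrogate_exact_when_residual_vector_vanishes_general E A B z hinv q G hG Q hQ Gt hGt hres
end
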